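/- Let S and T be multisets of m permutations of {1,…,n} with Σ_{σ∈S} P_σ = Σ_{τ∈T} P_τ. Let τ₀ ∈ T and suppose there exists σ₀ ∈ S that differs from τ₀ in exactly k positions, where k + 1 ≤ m. Then there exists a multiset S′ of m permutations of {1,…,n} with Σ_{σ∈S′} P_σ = Σ_{σ∈S} P_σ, such that τ₀ ∈ S′ and the multiset intersection of S and S′ has cardinality at least m − (k+1). -/

import Mathlib

/-!
In every row `i` the common matrix sum has a positive `(i, τ₀ i)` entry (it comes from `τ₀ ∈ T`),
so some member of `S` agrees with `τ₀` in row `i`. Let `R ≤ S` consist of `σ₀` together with one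
such member for each of the `k` rows where `σ₀` and `τ₀` disagree. The sum of the permutation
matrices of `R` dominates `P_τ₀`, and subtracting `P_τ₀` leaves an ℕ-matrix whose row and column
sums all equal `|R| - 1`; by Hall's theorem such a matrix is a sum of `|R| - 1` permutation
matrices. Replacing `R` in `S` by `τ₀` and these permutations keeps the matrix sum and all but at
most `k + 1` members of `S`.
-/

/-- The permutation matrix of `π`: entry `(i,j)` is `1` if `π i = j`, else `0`. -/
def permMat (n : ℕ) (π : Equiv.Perm (Fin n)) : Matrix (Fin n) (Fin n) ℕ :=
  Matrix.of fun i j => if π i = j then 1 else 0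

open Finset

namespace Matrix

theorem add_tsub_cancel_of_le {ι : Type*} {N P : Matrix ι ι ℕ} (hle : ∀ i j, P i j ≤ N i j) :
    P + (N - P) = N := by
  ext i j
  simp [Nat.add_sub_cancel' (hle i j)]

variable {ι : Type*} [Fintype ι]

def HasLineSums (N : Matrix ι ι ℕ) (r : ℕ) : Prop :=
  (∀ i, ∑ j, N i j = r) ∧ ∀ j, ∑ i, N i j = r

theorem HasLineSums.add {N P : Matrix ι ι ℕ} {r s : ℕ} (hN : N.HasLineSums r)
    (hP : P.HasLineSums s) : (N + P).HasLineSums (r + s) :=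
  ⟨fun i => by simp [sum_add_distrib, hN.1 i, hP.1 i],
    fun j => by simp [sum_add_distrib, hN.2 j, hP.2 j]⟩

theorem HasLineSums.sub {N P : Matrix ι ι ℕ} {r s : ℕ} (hN : N.HasLineSums r)
    (hP : P.HasLineSums s) (hle : ∀ i j, P i j ≤ N i j) : (N - P).HasLineSums (r - s) :=
  ⟨fun i => by simp [sum_tsub_distrib _ fun j _ => hle i j, hN.1 i, hP.1 i],
    fun j => by simp [sum_tsub_distrib _ fun i _ => hle i j, hN.2 j, hP.2 j]⟩

/-- Hall's condition holds for the supports of the rows: a set `s` of rows carries total mass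
`#s * r`, all of it inside the columns these rows meet, which carry total mass `r` each. -/
theorem HasLineSums.exists_perm_ne_zero {N : Matrix ι ι ℕ} {r : ℕ} (hN : N.HasLineSums r)
    (hr : 0 < r) : ∃ π : Equiv.Perm ι, ∀ i, N i (π i) ≠ 0 := by
  classical
  let support (i : ι) : Finset ι := {j | N i j ≠ 0}
  have hall (s : Finset ι) : #s ≤ #(s.biUnion support) := by
    refine Nat.le_of_mul_le_mul_right ?_ hr
    calc #s * r = ∑ i ∈ s, ∑ j, N i j := by simp only [hN.1, sum_const, smul_eq_mul]
      _ = ∑ i ∈ s, ∑ j ∈ s.biUnion support, N i j :=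
          sum_congr rfl fun i hi => (sum_subset (subset_univ _) fun j _ hj => by
            by_contra h
            exact hj (mem_biUnion.2 ⟨i, hi, by simp [support, h]⟩)).symm
      _ ≤ ∑ i, ∑ j ∈ s.biUnion support, N i j := sum_le_sum_of_subset (subset_univ s)
      _ = ∑ j ∈ s.biUnion support, ∑ i, N i j := sum_comm
      _ = #(s.biUnion support) * r := by simp only [hN.2, sum_const, smul_eq_mul]
  obtain ⟨f, hf, hfN⟩ := (all_card_le_biUnion_card_iff_exists_injective support).1 hall
  exact ⟨Equiv.ofBijective f (Finite.injective_iff_bijective.1 hf),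
    fun i => by simpa [support] using hfN i⟩

end Matrix

open Matrix

variable {n : ℕ}

@[simp]
theorem permMat_apply (σ : Equiv.Perm (Fin n)) (i j : Fin n) :
    permMat n σ i j = if σ i = j then 1 else 0 :=
  rfl

theorem hasLineSums_permMat (σ : Equiv.Perm (Fin n)) : (permMat n σ).HasLineSums 1 :=
  ⟨fun i => by simp, fun j => by simp [← Equiv.eq_symm_apply]⟩

theorem hasLineSums_sum_map_permMat (D : Multiset (Equiv.Perm (Fin n))) :
    (D.map (permMat n)).sum.HasLineSums (Multiset.card D) := by
  induction D using Multiset.induction_on with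
  | empty => exact ⟨fun i => by simp, fun j => by simp⟩
  | cons σ D ih => simpa [add_comm] using (hasLineSums_permMat σ).add ih

theorem sum_map_permMat_apply (S : Multiset (Equiv.Perm (Fin n))) (i j : Fin n) :
    (S.map (permMat n)).sum i j = S.countP (fun σ => σ i = j) := by
  induction S using Multiset.induction_on with
  | empty => simp
  | cons σ S ih => simp [ih, Multiset.countP_cons, add_comm]

theorem Matrix.HasLineSums.exists_sum_map_permMat_eq {N : Matrix (Fin n) (Fin n) ℕ} {r : ℕ}
    (hN : N.HasLineSums r) :
    ∃ D : Multiset (Equiv.Perm (Fin n)), Multiset.card D = r ∧ (D.map (permMat n)).sum = N := by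
  induction r generalizing N with
  | zero =>
    refine ⟨0, rfl, ?_⟩
    ext i j
    simpa using (sum_eq_zero_iff.1 (hN.1 i) j (mem_univ j)).symm
  | succ r ih =>
    obtain ⟨π, hπ⟩ := hN.exists_perm_ne_zero r.succ_pos
    have hle : ∀ i j, permMat n π i j ≤ N i j := by
      intro i j
      rw [permMat_apply]
      split_ifs with h
      · exact Nat.one_le_iff_ne_zero.2 (h ▸ hπ i)
      · exact Nat.zero_le _
    obtain ⟨D, hD, hDN⟩ := ih (hN.sub (hasLineSums_permMat π) hle)
    refine ⟨π ::ₘ D, by simp [hD], ?_⟩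
    rw [Multiset.map_cons, Multiset.sum_cons, hDN, add_tsub_cancel_of_le hle]

theorem sum_map_permMat_apply_pos_iff {S : Multiset (Equiv.Perm (Fin n))} {i j : Fin n} :
    0 < (S.map (permMat n)).sum i j ↔ ∃ σ ∈ S, σ i = j := by
  rw [sum_map_permMat_apply, Multiset.countP_pos]

theorem exists_card_eq_mem_sum_map_permMat_eq
    {R : Multiset (Equiv.Perm (Fin n))} {τ : Equiv.Perm (Fin n)} (hR : 0 < Multiset.card R)
    (hcover : ∀ i, ∃ σ ∈ R, σ i = τ i) :
    ∃ D : Multiset (Equiv.Perm (Fin n)), Multiset.card D = Multiset.card R ∧ τ ∈ D ∧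
      (D.map (permMat n)).sum = (R.map (permMat n)).sum := by
  have hle : ∀ i j, permMat n τ i j ≤ (R.map (permMat n)).sum i j := by
    intro i j
    rw [permMat_apply]
    split_ifs with h
    · exact h ▸ sum_map_permMat_apply_pos_iff.2 (hcover i)
    · exact Nat.zero_le _
  obtain ⟨D, hD, hDR⟩ :=
    ((hasLineSums_sum_map_permMat R).sub (hasLineSums_permMat τ) hle).exists_sum_map_permMat_eq
  refine ⟨τ ::ₘ D, ?_, Multiset.mem_cons_self τ D, ?_⟩
  · rw [Multiset.card_cons, hD, Nat.sub_add_cancel hR]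
  · rw [Multiset.map_cons, Multiset.sum_cons, hDR, add_tsub_cancel_of_le hle]

theorem Multiset.exists_le_card_le_of_forall_exists_apply_eq {ι : Type*} [Fintype ι]
    [DecidableEq ι] {S : Multiset (Equiv.Perm ι)} {σ₀ τ : Equiv.Perm ι} (hσ₀ : σ₀ ∈ S)
    (hS : ∀ i, ∃ σ ∈ S, σ i = τ i) :
    ∃ R ≤ S, σ₀ ∈ R ∧ card R ≤ #{i | σ₀ i ≠ τ i} + 1 ∧ ∀ i, ∃ σ ∈ R, σ i = τ i := by
  choose g hgS hg using hS
  let R : Finset (Equiv.Perm ι) := insert σ₀ (image g {i | σ₀ i ≠ τ i})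
  refine ⟨R.val, (le_iff_subset R.nodup).2 fun σ hσ => ?_, mem_insert_self σ₀ _,
    (card_insert_le _ _).trans (Nat.add_le_add_right card_image_le 1), fun i => ?_⟩
  · rcases Finset.mem_insert.1 hσ with rfl | hσ
    · exact hσ₀
    · obtain ⟨i, -, rfl⟩ := mem_image.1 hσ
      exact hgS i
  · by_cases h : σ₀ i = τ i
    · exact ⟨σ₀, mem_insert_self σ₀ _, h⟩
    · exact ⟨g i, mem_insert_of_mem (mem_image_of_mem g (by simp [h])), hg i⟩

theorem exists_move_matching_one_row_general
    (n m k : ℕ) (S T : Multiset (Equiv.Perm (Fin n)))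
    (hS : Multiset.card S = m)
    (hsum : (S.map (permMat n)).sum = (T.map (permMat n)).sum)
    (τ₀ : Equiv.Perm (Fin n)) (hτ₀ : τ₀ ∈ T)
    (σ₀ : Equiv.Perm (Fin n)) (hσ₀ : σ₀ ∈ S)
    (hk : (Finset.univ.filter fun i => σ₀ i ≠ τ₀ i).card = k) :
    ∃ S' : Multiset (Equiv.Perm (Fin n)),
      Multiset.card S' = m ∧
      (S'.map (permMat n)).sum = (S.map (permMat n)).sum ∧
      τ₀ ∈ S' ∧
      m - (k + 1) ≤ Multiset.card (S ∩ S') := by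
  have hcover (i : Fin n) : ∃ σ ∈ S, σ i = τ₀ i :=
    sum_map_permMat_apply_pos_iff.1 (hsum ▸ sum_map_permMat_apply_pos_iff.2 ⟨τ₀, hτ₀, rfl⟩)
  obtain ⟨R, hRS, hσ₀R, hRcard, hRcover⟩ :=
    Multiset.exists_le_card_le_of_forall_exists_apply_eq hσ₀ hcover
  obtain ⟨D, hD, hτ₀D, hDR⟩ :=
    exists_card_eq_mem_sum_map_permMat_eq (Multiset.card_pos_iff_exists_mem.2 ⟨σ₀, hσ₀R⟩) hRcover
  have hSR : S - R + R = S := tsub_add_cancel_of_le hRS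
  refine ⟨S - R + D, ?_, ?_, Multiset.mem_add.2 (Or.inr hτ₀D), ?_⟩
  · rw [Multiset.card_add, hD, ← Multiset.card_add, hSR, hS]
  · rw [Multiset.map_add, Multiset.sum_add, hDR, ← Multiset.sum_add, ← Multiset.map_add, hSR]
  · calc m - (k + 1) ≤ Multiset.card (S - R) := by
          rw [← hS, Multiset.card_sub hRS]
          omega
      _ ≤ Multiset.card (S ∩ (S - R + D)) :=
          Multiset.card_le_card (Multiset.le_inter (Multiset.sub_le_self S R)
            (Multiset.le_add_right _ _))

/-- Let `S` and `T` be multisets of `m` permutations with the same sum of permutation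
matrices, let `τ₀ ∈ T`, and suppose some `σ₀ ∈ S` differs from `τ₀` in exactly `k`
positions with `k + 1 ≤ m`.  Then there is a multiset `S'` of `m` permutations with the
same sum of permutation matrices as `S`, containing `τ₀`, and sharing at least
`m - (k + 1)` elements (with multiplicity) with `S`. -/
theorem exists_move_matching_one_row
    (n m k : ℕ) (S T : Multiset (Equiv.Perm (Fin n)))
    (hS : Multiset.card S = m) (hT : Multiset.card T = m)
    (hsum : (S.map (permMat n)).sum = (T.map (permMat n)).sum)
    (τ₀ : Equiv.Perm (Fin n)) (hτ₀ : τ₀ ∈ T)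
    (σ₀ : Equiv.Perm (Fin n)) (hσ₀ : σ₀ ∈ S)
    (hk : (Finset.univ.filter fun i => σ₀ i ≠ τ₀ i).card = k)
    (hkm : k + 1 ≤ m) :
    ∃ S' : Multiset (Equiv.Perm (Fin n)),
      Multiset.card S' = m ∧
      (S'.map (permMat n)).sum = (S.map (permMat n)).sum ∧
      τ₀ ∈ S' ∧
      m - (k + 1) ≤ Multiset.card (S ∩ S') :=
  exists_move_matching_one_row_general n m k S T hS hsum τ₀ hτ₀ σ₀ hσ₀ hk
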